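/- Let X and Y be independent random variables with X exponential of rate 1/2 (i.e., P(X > x) = e^{-x/2} for x ≥ 0) and Y ~ Gamma(N-2, 2) for an integer N ≥ 3. Let C₁, C₂ > 0. Then E[log₂(1 + C₁·X/(1 + C₂·Y))] = ∫₀^∞ exp(-(2^t - 1)/(2C₁)) · (1 + (2^t - 1)·C₂/C₁)^{-(N-2)} dt. -/

import Mathlib

open MeasureTheory ProbabilityTheory Real Set
open scoped ENNReal

lemma gamma_null (a r : ℝ) : gammaMeasure a r (Set.Iio 0) = 0 := by
  rw [gammaMeasure, withDensity_apply _ measurableSet_Iio]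
  exact lintegral_gammaPDF_of_nonpos le_rfl

lemma gamma_ae_nonneg (a r : ℝ) : ∀ᵐ y ∂(gammaMeasure a r), 0 ≤ y := by
  rw [ae_iff]
  convert gamma_null a r using 2
  ext y; simp [not_le]

lemma exp_tail {r c : ℝ} (hr : 0 < r) (hc : 0 ≤ c) :
    expMeasure r (Set.Ioi c) = ENNReal.ofReal (Real.exp (-(r * c))) := by
  have hm : IsProbabilityMeasure (expMeasure r) := isProbabilityMeasure_expMeasure hr
  have hIic : expMeasure r (Set.Iic c) = ENNReal.ofReal (1 - Real.exp (-(r * c))) := by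
    rw [expMeasure, gammaMeasure, withDensity_apply _ measurableSet_Iic]
    simp only [gammaPDF]
    have := lintegral_exponentialPDF_eq_antiDeriv hr c
    simp only [exponentialPDF, exponentialPDFReal] at this
    rw [this, if_pos hc]
  rw [← Set.compl_Iic, measure_compl measurableSet_Iic (measure_ne_top _ _), measure_univ, hIic]
  have h1 : Real.exp (-(r * c)) ≤ 1 := Real.exp_le_one_iff.mpr (by nlinarith)
  rw [show (1 : ℝ≥0∞) = ENNReal.ofReal 1 by simp,
    ← ENNReal.ofReal_sub _ (by linarith : (0:ℝ) ≤ 1 - Real.exp (-(r * c)))]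
  ring_nf

lemma gamma_laplace {a s : ℝ} (ha : 0 < a) (hs : 0 ≤ s) :
    ∫⁻ y, ENNReal.ofReal (Real.exp (-(s * y))) ∂(gammaMeasure a (1/2))
      = ENNReal.ofReal ((1 + 2 * s) ^ (-a)) := by
  have hΓ : 0 < Real.Gamma a := Real.Gamma_pos_of_pos ha
  have hb : (0:ℝ) < 1/2 + s := by linarith
  have hpdfm : Measurable (gammaPDF a (1/2)) := (measurable_gammaPDFReal a (1/2)).ennreal_ofReal
  set G : ℝ → ℝ := fun x => gammaPDFReal a (1/2) x * Real.exp (-(s * x)) with hG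
  have hGnn : ∀ x, 0 ≤ G x := fun x =>
    mul_nonneg (gammaPDFReal_nonneg ha (by norm_num) x) (Real.exp_nonneg _)
  have hGeq : ∀ x ∈ Ioi (0:ℝ), G x =
      ((1/2:ℝ) ^ a / Real.Gamma a) * (x ^ (a - 1) * Real.exp (-((1/2 + s) * x))) := by
    intro x hx
    simp only [hG, gammaPDFReal, if_pos (le_of_lt (mem_Ioi.mp hx))]
    rw [show -((1/2 + s) * x) = -(1/2 * x) + -(s * x) by ring, Real.exp_add]
    ring
  have hGint : Integrable G := by
    rw [← integrableOn_univ, ← Set.Iio_union_Ici (a := (0:ℝ)), integrableOn_union]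
    constructor
    · exact (integrableOn_zero (ε' := ℝ)).congr_fun
        (fun x hx => by
          simp only [hG, gammaPDFReal, if_neg (not_le.mpr (mem_Iio.mp hx)), zero_mul]) measurableSet_Iio
    · rw [integrableOn_Ici_iff_integrableOn_Ioi]
      have base := integrableOn_rpow_mul_exp_neg_mul_rpow
        (p := 1) (s := a - 1) (b := 1/2 + s) (by linarith) one_pos hb
      simp only [Real.rpow_one, neg_mul] at base
      exact MeasureTheory.IntegrableOn.congr_fun
        (base.const_mul ((1/2:ℝ) ^ a / Real.Gamma a))
        (fun x hx => (hGeq x hx).symm) measurableSet_Ioi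
  calc ∫⁻ y, ENNReal.ofReal (Real.exp (-(s * y))) ∂(gammaMeasure a (1/2))
      = ∫⁻ y, gammaPDF a (1/2) y * ENNReal.ofReal (Real.exp (-(s * y))) := by
        rw [gammaMeasure, lintegral_withDensity_eq_lintegral_mul _ hpdfm (by fun_prop)]
        rfl
    _ = ∫⁻ y, ENNReal.ofReal (G y) := by
        congr 1; ext y
        rw [hG, gammaPDF, ← ENNReal.ofReal_mul (gammaPDFReal_nonneg ha (by norm_num) y)]
    _ = ENNReal.ofReal (∫ y, G y) :=
        (ofReal_integral_eq_lintegral_ofReal hGint (ae_of_all _ hGnn)).symm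
    _ = ENNReal.ofReal ((1 + 2 * s) ^ (-a)) := by
        congr 1
        rw [← setIntegral_eq_integral_of_forall_compl_eq_zero
          (s := Ici (0:ℝ)) (fun x hx => by
            simp only [hG, gammaPDFReal, if_neg (not_le.mpr (by simpa using hx)), zero_mul]),
          integral_Ici_eq_integral_Ioi,
          setIntegral_congr_fun measurableSet_Ioi hGeq,
          MeasureTheory.integral_const_mul, integral_rpow_mul_exp_neg_mul_Ioi ha hb]
        have key : (1/2:ℝ) ^ a * ((1/(1/2+s)) ^ a) = (1+2*s) ^ (-a) := by
          rw [← Real.mul_rpow (by norm_num) (by positivity), Real.rpow_neg (by linarith),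
            ← Real.inv_rpow (by linarith)]
          congr 1
          field_simp
        rw [← key]
        field_simp

lemma joint_tail {a c C2 : ℝ} (ha : 0 < a) (hc : 0 ≤ c) (hC2 : 0 < C2) :
    (gammaMeasure a (1/2)).prod (expMeasure (1/2)) {p : ℝ × ℝ | c * (1 + C2 * p.1) < p.2}
      = ENNReal.ofReal (Real.exp (-(c/2)) * (1 + c * C2) ^ (-a)) := by
  have hPG : IsProbabilityMeasure (gammaMeasure a (1/2)) :=
    isProbabilityMeasure_gammaMeasure ha (by norm_num)
  have hPE : IsProbabilityMeasure (expMeasure (1/2)) :=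
    isProbabilityMeasure_expMeasure (by norm_num)
  have hS : MeasurableSet {p : ℝ × ℝ | c * (1 + C2 * p.1) < p.2} :=
    measurableSet_lt (by fun_prop) measurable_snd
  rw [Measure.prod_apply hS]
  have hcongr : ∀ᵐ y ∂(gammaMeasure a (1/2)),
      expMeasure (1/2) (Prod.mk y ⁻¹' {p : ℝ × ℝ | c * (1 + C2 * p.1) < p.2})
        = ENNReal.ofReal (Real.exp (-(c/2))) * ENNReal.ofReal (Real.exp (-((c * C2/2) * y))) := by
    filter_upwards [gamma_ae_nonneg a (1/2)] with y hy
    have h1 : (0:ℝ) ≤ c * (1 + C2 * y) := by positivity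
    have : Prod.mk y ⁻¹' {p : ℝ × ℝ | c * (1 + C2 * p.1) < p.2} = Set.Ioi (c * (1 + C2 * y)) := rfl
    rw [this, exp_tail (by norm_num) h1, ← ENNReal.ofReal_mul (Real.exp_nonneg _), ← Real.exp_add]
    congr 2
    ring
  rw [lintegral_congr_ae hcongr, lintegral_const_mul' _ _ ENNReal.ofReal_ne_top,
    gamma_laplace ha (by positivity), ← ENNReal.ofReal_mul (Real.exp_nonneg _)]
  congr 3
  ring

/-- ergodic rate of the communication eavesdropper as a single integral. -/
theorem stmt_10 {Ω : Type*} [MeasurableSpace Ω] (μ : Measure Ω) [IsProbabilityMeasure μ]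
    (X Y : Ω → ℝ) (N : ℕ) (hN : 3 ≤ N) (C1 C2 : ℝ) (hC1 : 0 < C1) (hC2 : 0 < C2)
    (hindep : IndepFun X Y μ)
    (hX : Measure.map X μ = ProbabilityTheory.expMeasure (1 / 2))
    (hY : Measure.map Y μ = ProbabilityTheory.gammaMeasure ((N : ℝ) - 2) (1 / 2)) :
    ∫ ω, Real.logb 2 (1 + C1 * X ω / (1 + C2 * Y ω)) ∂μ
      = ∫ t in Set.Ioi (0 : ℝ),
          Real.exp (-((2 : ℝ) ^ t - 1) / (2 * C1))
            * (1 + ((2 : ℝ) ^ t - 1) * C2 / C1) ^ (-((N : ℝ) - 2)) := by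
  have hN3 : (3:ℝ) ≤ (N:ℝ) := by exact_mod_cast hN
  set a : ℝ := (N:ℝ) - 2 with ha_def
  have ha : 0 < a := by simp only [ha_def]; linarith
  have hPE : IsProbabilityMeasure (expMeasure (1/2)) :=
    isProbabilityMeasure_expMeasure (by norm_num)
  have hPG : IsProbabilityMeasure (gammaMeasure a (1/2)) :=
    isProbabilityMeasure_gammaMeasure ha (by norm_num)
  -- a.e. measurability
  have hXm : AEMeasurable X μ := aemeasurable_of_map_neZero (by rw [hX]; exact ⟨hPE.ne_zero _⟩)
  have hYm : AEMeasurable Y μ := aemeasurable_of_map_neZero (by rw [hY]; exact ⟨hPG.ne_zero _⟩)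
  -- a.e. nonnegativity
  have hX0 : ∀ᵐ ω ∂μ, 0 ≤ X ω := by
    rw [ae_iff]
    have : {ω | ¬ 0 ≤ X ω} = X ⁻¹' (Set.Iio 0) := by ext ω; simp [not_le]
    rw [this, ← Measure.map_apply_of_aemeasurable hXm measurableSet_Iio, hX, expMeasure,
      gamma_null]
  have hY0 : ∀ᵐ ω ∂μ, 0 ≤ Y ω := by
    rw [ae_iff]
    have : {ω | ¬ 0 ≤ Y ω} = Y ⁻¹' (Set.Iio 0) := by ext ω; simp [not_le]
    rw [this, ← Measure.map_apply_of_aemeasurable hYm measurableSet_Iio, hY, gamma_null]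
  set f : Ω → ℝ := fun ω => Real.logb 2 (1 + C1 * X ω / (1 + C2 * Y ω)) with hf_def
  have hDpos : ∀ ω, 0 ≤ Y ω → (0:ℝ) < 1 + C2 * Y ω := fun ω hy => by positivity
  have hfm : AEMeasurable f μ := by
    apply AEMeasurable.div _ aemeasurable_const
    exact (Real.measurable_log.comp_aemeasurable
      ((aemeasurable_const.add ((aemeasurable_const.mul hXm).div
        (aemeasurable_const.add (aemeasurable_const.mul hYm))))))
  have hfnn : 0 ≤ᵐ[μ] f := by
    filter_upwards [hX0, hY0] with ω hx hy
    have hD := hDpos ω hy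
    apply Real.logb_nonneg one_lt_two
    have : 0 ≤ C1 * X ω / (1 + C2 * Y ω) := by positivity
    linarith
  -- joint map
  have hmap : μ.map (fun ω => (Y ω, X ω)) = (gammaMeasure a (1/2)).prod (expMeasure (1/2)) := by
    rw [← hY, ← hX]
    exact (indepFun_iff_map_prod_eq_prod_map_map hYm hXm).mp hindep.symm
  set g : ℝ → ℝ := fun t => Real.exp (-((2:ℝ) ^ t - 1) / (2 * C1))
      * (1 + ((2:ℝ) ^ t - 1) * C2 / C1) ^ (-a) with hg_def
  have h2pow : Measurable fun t : ℝ => (2:ℝ) ^ t := by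
    have : (fun t : ℝ => (2:ℝ) ^ t) = fun t => Real.exp (Real.log 2 * t) :=
      funext fun t => Real.rpow_def_of_pos two_pos t
    rw [this]; fun_prop
  have h2cont : Continuous fun t : ℝ => (2:ℝ) ^ t := by
    have : (fun t : ℝ => (2:ℝ) ^ t) = fun t => Real.exp (Real.log 2 * t) :=
      funext fun t => Real.rpow_def_of_pos two_pos t
    rw [this]; fun_prop
  have hgsm : AEStronglyMeasurable g (volume.restrict (Set.Ioi (0:ℝ))) := by
    apply ContinuousOn.aestronglyMeasurable _ measurableSet_Ioi
    apply ContinuousOn.mul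
    · exact (Real.continuous_exp.comp
        (by continuity : Continuous (fun t : ℝ => -((2:ℝ) ^ t - 1) / (2 * C1)))).continuousOn
    · apply ContinuousOn.rpow_const (Continuous.continuousOn
        (by continuity : Continuous (fun t : ℝ => 1 + ((2:ℝ) ^ t - 1) * C2 / C1)))
      intro t ht
      left
      have h2t : (1:ℝ) ≤ (2:ℝ) ^ t := by
        have := Real.rpow_le_rpow_of_exponent_le one_le_two (le_of_lt ht : (0:ℝ) ≤ t)
        rwa [Real.rpow_zero] at this
      have hq : (0:ℝ) ≤ ((2:ℝ) ^ t - 1) * C2 / C1 :=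
        div_nonneg (mul_nonneg (by linarith) hC2.le) hC1.le
      positivity
  -- key pointwise tail identity
  have key : ∀ t ∈ Set.Ioi (0:ℝ), μ {ω | t < f ω} = ENNReal.ofReal (g t) := by
    intro t ht
    have h2t : (1:ℝ) ≤ (2:ℝ) ^ t := by
      have := Real.rpow_le_rpow_of_exponent_le one_le_two (le_of_lt ht : (0:ℝ) ≤ t)
      rwa [Real.rpow_zero] at this
    set c : ℝ := ((2:ℝ) ^ t - 1) / C1 with hc_def
    have hc : 0 ≤ c := by
      apply div_nonneg _ (le_of_lt hC1); linarith
    have hset : {ω | t < f ω} =ᵐ[μ] {ω | c * (1 + C2 * Y ω) < X ω} := by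
      rw [Filter.eventuallyEq_set]
      filter_upwards [hX0, hY0] with ω hx hy
      have hD := hDpos ω hy
      have hz : (0:ℝ) < 1 + C1 * X ω / (1 + C2 * Y ω) := by
        have : 0 ≤ C1 * X ω / (1 + C2 * Y ω) := by positivity
        linarith
      simp only [Set.mem_setOf_eq, hf_def]
      rw [Real.lt_logb_iff_rpow_lt one_lt_two hz, ← sub_lt_iff_lt_add', lt_div_iff₀ hD,
        hc_def, div_mul_eq_mul_div, div_lt_iff₀ hC1]
      constructor <;> intro h <;> nlinarith
    rw [measure_congr hset]
    have hS : MeasurableSet {p : ℝ × ℝ | c * (1 + C2 * p.1) < p.2} :=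
      measurableSet_lt (by fun_prop) measurable_snd
    have : {ω | c * (1 + C2 * Y ω) < X ω}
        = (fun ω => (Y ω, X ω)) ⁻¹' {p : ℝ × ℝ | c * (1 + C2 * p.1) < p.2} := rfl
    rw [this, ← Measure.map_apply_of_aemeasurable (hYm.prodMk hXm) hS, hmap,
      joint_tail ha hc hC2]
    congr 2
    · rw [hc_def]; ring
    · rw [hc_def]; ring
  -- conclude
  rw [integral_eq_lintegral_of_nonneg_ae hfnn hfm.aestronglyMeasurable,
    lintegral_eq_lintegral_meas_lt μ hfnn hfm,
    setLIntegral_congr_fun measurableSet_Ioi key]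
  have hgnn : 0 ≤ᵐ[volume.restrict (Set.Ioi (0:ℝ))] g := by
    refine (ae_restrict_iff' measurableSet_Ioi).mpr (ae_of_all _ fun t ht => ?_)
    have h2t : (1:ℝ) ≤ (2:ℝ) ^ t := by
      have := Real.rpow_le_rpow_of_exponent_le one_le_two (le_of_lt ht : (0:ℝ) ≤ t)
      rwa [Real.rpow_zero] at this
    have hq : (0:ℝ) ≤ ((2:ℝ) ^ t - 1) * C2 / C1 :=
      div_nonneg (mul_nonneg (by linarith) hC2.le) hC1.le
    have hbase : (0:ℝ) ≤ 1 + ((2:ℝ) ^ t - 1) * C2 / C1 := by linarith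
    exact mul_nonneg (Real.exp_nonneg _) (Real.rpow_nonneg hbase _)
  rw [integral_eq_lintegral_of_nonneg_ae hgnn hgsm]
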